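/- Let A and B be nonempty finite sets and let a uniformly random linear order be placed on A∪B. Then the probability that the maximal element of A is strictly greater than the maximal element of B (both maxima taken within A and B respectively) equals |A\B|/|A∪B|. -/

import Mathlib

open Finset

/-- The number of permutations fixing `π i = j` is independent of `j`, so
`n` times that number is `n!`. -/
lemma fiber_card_mul (n : ℕ) (i j : Fin n) :
    (Finset.univ.filter fun π : Equiv.Perm (Fin n) => π i = j).card * n =
      Fintype.card (Equiv.Perm (Fin n)) := by
  have hconst : ∀ j' : Fin n,
      (Finset.univ.filter fun π : Equiv.Perm (Fin n) => π i = j').card =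
      (Finset.univ.filter fun π : Equiv.Perm (Fin n) => π i = j).card := by
    intro j'
    apply Finset.card_bij' (fun π _ => Equiv.swap j' j * π)
      (fun π _ => Equiv.swap j j' * π)
    · intro π hπ
      simp only [Finset.mem_filter, Finset.mem_univ, true_and] at hπ ⊢
      simp [hπ, Equiv.swap_apply_left]
    · intro π hπ
      simp only [Finset.mem_filter, Finset.mem_univ, true_and] at hπ ⊢
      simp [hπ, Equiv.swap_apply_left]
    · intro π _
      ext x
      simp [← Equiv.swap_comm j j', Equiv.swap_apply_self]
    · intro π _
      ext x
      simp [← Equiv.swap_comm j j', Equiv.swap_apply_self]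
  have hsum : (Finset.univ : Finset (Equiv.Perm (Fin n))).card =
      ∑ j' : Fin n, (Finset.univ.filter fun π : Equiv.Perm (Fin n) => π i = j').card := by
    exact Finset.card_eq_sum_card_fiberwise (fun π _ => Finset.mem_univ _)
  rw [← Finset.card_univ, hsum]
  simp only [hconst, Finset.sum_const, Finset.card_univ, Fintype.card_fin, smul_eq_mul]
  ring

theorem prob_max_gt_eq_sdiff_ratio {α : Type*} [DecidableEq α]
    (A B : Finset α) (hA : A.Nonempty) (hB : B.Nonempty)
    (n : ℕ) (hn : (A ∪ B).card = n) (e : {x // x ∈ A ∪ B} ≃ Fin n)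
    (rank : Equiv.Perm (Fin n) → α → ℕ)
    (hrank : ∀ π a, rank π a = if h : a ∈ A ∪ B then (π (e ⟨a, h⟩) : ℕ) else 0) :
    ((Finset.univ.filter (fun π : Equiv.Perm (Fin n) =>
        ∃ a ∈ A, ∃ b ∈ B, (∀ a' ∈ A, rank π a' ≤ rank π a) ∧
          (∀ b' ∈ B, rank π b' ≤ rank π b) ∧ rank π b < rank π a)).card : ℝ) /
      (Fintype.card (Equiv.Perm (Fin n)) : ℝ) =
      ((A \ B).card : ℝ) / ((A ∪ B).card : ℝ) := by
  have hABne : (A ∪ B).Nonempty := hA.mono Finset.subset_union_left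
  have hnpos : 0 < n := hn ▸ Finset.card_pos.mpr hABne
  set last : Fin n := ⟨n - 1, by omega⟩ with hlast
  -- rank of an element in A ∪ B
  have hrk : ∀ (π : Equiv.Perm (Fin n)) (a : α) (h : a ∈ A ∪ B),
      rank π a = (π (e ⟨a, h⟩) : ℕ) := by
    intro π a h; rw [hrank]; exact dif_pos h
  have hrk_inj : ∀ (π : Equiv.Perm (Fin n)) (a b : α) (ha : a ∈ A ∪ B) (hb : b ∈ A ∪ B),
      rank π a = rank π b → a = b := by
    intro π a b ha hb h
    rw [hrk π a ha, hrk π b hb] at h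
    have : (⟨a, ha⟩ : {x // x ∈ A ∪ B}) = ⟨b, hb⟩ :=
      e.injective (π.injective (Fin.val_injective h))
    exact congrArg Subtype.val this
  have hrk_le : ∀ (π : Equiv.Perm (Fin n)) (a : α), rank π a ≤ n - 1 := by
    intro π a
    rw [hrank]
    split
    · have := (π (e ⟨a, ‹_›⟩)).isLt; omega
    · omega
  -- the event is exactly: the top element lies in A \ B
  have hev : ∀ π : Equiv.Perm (Fin n),
      (∃ a ∈ A, ∃ b ∈ B, (∀ a' ∈ A, rank π a' ≤ rank π a) ∧
          (∀ b' ∈ B, rank π b' ≤ rank π b) ∧ rank π b < rank π a) ↔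
      ((e.symm (π.symm last) : α) ∈ A \ B) := by
    intro π
    set x : {x // x ∈ A ∪ B} := e.symm (π.symm last) with hx
    have hxmem : (x : α) ∈ A ∪ B := x.2
    have hxr : rank π (x : α) = n - 1 := by
      rw [hrk π (x : α) hxmem]
      have : (⟨(x : α), hxmem⟩ : {x // x ∈ A ∪ B}) = x := Subtype.ext rfl
      rw [this, hx]
      simp [last]
    constructor
    · rintro ⟨a, ha, b, hb, hmaxA, hmaxB, hlt⟩
      rw [Finset.mem_sdiff]
      by_contra hcon
      push_neg at hcon
      have hxB : (x : α) ∈ B := by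
        rcases Finset.mem_union.mp hxmem with h | h
        · exact hcon h
        · exact h
      have h1 : rank π (x : α) ≤ rank π b := hmaxB _ hxB
      have h2 : rank π a ≤ n - 1 := hrk_le π a
      omega
    · intro hxAB
      rw [Finset.mem_sdiff] at hxAB
      obtain ⟨b, hbB, hbmax⟩ := B.exists_max_image (rank π) hB
      refine ⟨(x : α), hxAB.1, b, hbB, ?_, hbmax, ?_⟩
      · intro a' _
        rw [hxr]; exact hrk_le π a'
      · rw [hxr]
        have hne : b ≠ (x : α) := fun h => hxAB.2 (h ▸ hbB)
        have hble : rank π b ≤ n - 1 := hrk_le π b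
        rcases lt_or_eq_of_le hble with h | h
        · exact h
        · exact absurd (hrk_inj π b (x : α) (Finset.mem_union_right A hbB)
            hxmem (h.trans hxr.symm)) hne
  have hset : (Finset.univ.filter (fun π : Equiv.Perm (Fin n) =>
        ∃ a ∈ A, ∃ b ∈ B, (∀ a' ∈ A, rank π a' ≤ rank π a) ∧
          (∀ b' ∈ B, rank π b' ≤ rank π b) ∧ rank π b < rank π a)) =
      (Finset.univ.filter (fun π : Equiv.Perm (Fin n) =>
        (e.symm (π.symm last) : α) ∈ A \ B)) := by
    ext π
    simp only [Finset.mem_filter, Finset.mem_univ, true_and]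
    exact hev π
  rw [hset]
  -- count via fibers over π.symm last
  set Q : Fin n → Prop := fun i => (e.symm i : α) ∈ A \ B with hQ
  have : DecidablePred Q := fun i => by rw [hQ]; infer_instance
  set t : Finset (Fin n) := Finset.univ.filter Q with ht
  have hcount : (Finset.univ.filter fun π : Equiv.Perm (Fin n) =>
      (e.symm (π.symm last) : α) ∈ A \ B).card =
      ∑ i ∈ t, (Finset.univ.filter fun π : Equiv.Perm (Fin n) => π.symm last = i).card := by
    rw [Finset.card_eq_sum_card_fiberwise
      (f := fun π : Equiv.Perm (Fin n) => π.symm last) (t := t)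
      (fun π hπ => by
        rw [ht, Finset.mem_coe, Finset.mem_filter]
        exact ⟨Finset.mem_univ _, (Finset.mem_filter.mp (Finset.mem_coe.mp hπ)).2⟩)]
    refine Finset.sum_congr rfl (fun i hi => ?_)
    congr 1
    rw [Finset.filter_filter]
    apply Finset.filter_congr
    intro π _
    rw [ht, Finset.mem_filter] at hi
    constructor
    · rintro ⟨_, h⟩; exact h
    · rintro h; exact ⟨h ▸ hi.2, h⟩
  have hfib : ∀ i : Fin n,
      (Finset.univ.filter fun π : Equiv.Perm (Fin n) => π.symm last = i).card * n =
      Fintype.card (Equiv.Perm (Fin n)) := by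
    intro i
    have hswap : (Finset.univ.filter fun π : Equiv.Perm (Fin n) => π.symm last = i).card =
        (Finset.univ.filter fun σ : Equiv.Perm (Fin n) => σ last = i).card := by
      apply Finset.card_bij' (fun π _ => π.symm) (fun σ _ => σ.symm) <;>
      · intro x hx
        simp only [Finset.mem_filter, Finset.mem_univ, true_and] at hx ⊢
        simp [hx]
    rw [hswap]
    exact fiber_card_mul n last i
  have htot : (Finset.univ.filter fun π : Equiv.Perm (Fin n) =>
      (e.symm (π.symm last) : α) ∈ A \ B).card * n =
      t.card * Fintype.card (Equiv.Perm (Fin n)) := by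
    rw [hcount, Finset.sum_mul]
    rw [Finset.sum_congr rfl (fun i _ => hfib i)]
    simp [mul_comm]
  have htcard : t.card = (A \ B).card := by
    apply Finset.card_bij (fun i _ => (e.symm i : α))
    · intro i hi
      rw [ht, Finset.mem_filter] at hi
      exact hi.2
    · intro i hi j hj h
      exact e.symm.injective (Subtype.ext h)
    · intro a ha
      have haU : a ∈ A ∪ B := Finset.mem_union_left B (Finset.mem_sdiff.mp ha).1
      refine ⟨e ⟨a, haU⟩, ?_, by simp⟩
      rw [ht, Finset.mem_filter]
      refine ⟨Finset.mem_univ _, ?_⟩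
      show (e.symm (e ⟨a, haU⟩) : α) ∈ A \ B
      simpa using ha
  have hNpos : 0 < Fintype.card (Equiv.Perm (Fin n)) := Fintype.card_pos
  rw [hn, ← htcard]
  have hnR : (n : ℝ) ≠ 0 := Nat.cast_ne_zero.mpr hnpos.ne'
  have hNR : (Fintype.card (Equiv.Perm (Fin n)) : ℝ) ≠ 0 := Nat.cast_ne_zero.mpr hNpos.ne'
  rw [div_eq_div_iff hNR hnR]
  have := congrArg (Nat.cast : ℕ → ℝ) htot
  push_cast at this ⊢
  convert this using 3
  congr 1
  simp [Finset.mem_filter]
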